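/- arXiv:math/0512566 — 6 statements merged into one kernel-verified Lean document; each statement's English description precedes it below -/
import Mathlib

section
/- Let R be a Z-local ring. Then the characteristic of R is 0, a prime p, or the square p^2 of a prime p. -/
def IsZLocal (R : Type*) [CommRing R] [IsLocalRing R] : Prop :=
  (∀ z : R, z ∈ IsLocalRing.maximalIdeal R ↔ ∃ y : R, y ≠ 0 ∧ z * y = 0) ∧
  (IsLocalRing.maximalIdeal R) ^ 2 = ⊥

theorem stmt_3 (R : Type*) [CommRing R] [IsLocalRing R] (h : IsZLocal R)
    (n : ℕ) (hn : CharP R n) :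
    n = 0 ∨ n.Prime ∨ ∃ p : ℕ, p.Prime ∧ n = p ^ 2 := by
  rcases eq_or_ne n 0 with h0 | h0
  · exact Or.inl h0
  right
  have hn1 : n ≠ 1 := by
    rintro rfl
    have : (1 : R) = 0 := by exact_mod_cast CharP.cast_eq_zero R 1
    exact one_ne_zero this
  obtain ⟨p, hpp, hpd⟩ : ∃ p, p.Prime ∧ p ∣ n :=
    ⟨n.minFac, Nat.minFac_prime hn1, Nat.minFac_dvd n⟩
  obtain ⟨m, hm⟩ := hpd
  have hmpos : 0 < m := by
    rcases Nat.eq_zero_or_pos m with h' | h'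
    · subst h'; simp at hm; omega
    · exact h'
  have hmlt : m < n := by
    have h1p : 1 < p := hpp.one_lt
    calc m < p * m := by nlinarith
    _ = n := hm.symm
  have hmne : (m : R) ≠ 0 := by
    intro hz
    have := (CharP.cast_eq_zero_iff R n m).mp hz
    exact absurd (Nat.le_of_dvd hmpos this) (by omega)
  have hpm : (p : R) * (m : R) = 0 := by
    rw [← Nat.cast_mul, ← hm]
    exact CharP.cast_eq_zero R n
  have hpmem : (p : R) ∈ IsLocalRing.maximalIdeal R :=
    (h.1 _).mpr ⟨m, hmne, hpm⟩
  have hsq : ((p : R)) ^ 2 = 0 := by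
    have hmem : (p : R) * (p : R) ∈
        IsLocalRing.maximalIdeal R * IsLocalRing.maximalIdeal R :=
      Ideal.mul_mem_mul hpmem hpmem
    rw [← sq, ← sq] at hmem
    rw [h.2] at hmem
    simpa using hmem
  have hdvd : n ∣ p ^ 2 := by
    have : ((p ^ 2 : ℕ) : R) = 0 := by push_cast; exact hsq
    exact (CharP.cast_eq_zero_iff R n _).mp this
  obtain ⟨i, hi, rfl⟩ := (Nat.dvd_prime_pow hpp).mp hdvd
  interval_cases i
  · simp at hn1
  · exact Or.inl (by simpa using hpp)
  · exact Or.inr ⟨p, hpp, rfl⟩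
end

section
/- Let A ⊆ B be an extension of commutative rings and α ∈ B be integral over A with monic minimal polynomials f, g ∈ A[x] (monic polynomials of least degree annihilating α). If A = ℤ/p²ℤ for a prime p, then f ≡ g (mod p), i.e., p divides every coefficient of f - g. -/
open Polynomial

lemma aux_dvd_of_map_eq_zero {p : ℕ} (hp : p.Prime) (c : ZMod (p^2))
    (h : ZMod.castHom (dvd_pow_self p two_ne_zero) (ZMod p) c = 0) :
    (p : ZMod (p^2)) ∣ c := by
  haveI : NeZero p := ⟨hp.ne_zero⟩
  haveI : NeZero (p^2) := ⟨pow_ne_zero 2 hp.ne_zero⟩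
  have h1 : ((c.val : ℕ) : ZMod p) = 0 := by
    rwa [ZMod.natCast_val, ← ZMod.castHom_apply (h := dvd_pow_self p two_ne_zero)]
  rw [ZMod.natCast_eq_zero_iff] at h1
  obtain ⟨k, hk⟩ := h1
  refine ⟨(k : ZMod (p^2)), ?_⟩
  rw [← Nat.cast_mul, ← hk, ZMod.natCast_val, ZMod.cast_id]

lemma aux_isUnit_of_map_ne_zero {p : ℕ} (hp : p.Prime) (c : ZMod (p^2))
    (h : ZMod.castHom (dvd_pow_self p two_ne_zero) (ZMod p) c ≠ 0) :
    IsUnit c := by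
  haveI : NeZero p := ⟨hp.ne_zero⟩
  haveI : NeZero (p^2) := ⟨pow_ne_zero 2 hp.ne_zero⟩
  have hc : c = ((c.val : ℕ) : ZMod (p^2)) := by rw [ZMod.natCast_val, ZMod.cast_id]
  rw [hc, ZMod.isUnit_iff_coprime]
  have h1 : ¬ ((c.val : ℕ) : ZMod p) = 0 := by
    rwa [ZMod.natCast_val, ← ZMod.castHom_apply (h := dvd_pow_self p two_ne_zero)]
  rw [ZMod.natCast_eq_zero_iff] at h1
  have := Nat.Coprime.pow_right 2 ((Nat.Prime.coprime_iff_not_dvd hp).2 h1).symm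
  simpa using this

theorem stmt_5 (p : ℕ) (hp : p.Prime) (B : Type*) [CommRing B]
    [Algebra (ZMod (p ^ 2)) B] (α : B)
    (f g : Polynomial (ZMod (p ^ 2)))
    (hf_monic : f.Monic) (hg_monic : g.Monic)
    (hf_root : Polynomial.aeval α f = 0) (hg_root : Polynomial.aeval α g = 0)
    (hf_min : ∀ h : Polynomial (ZMod (p ^ 2)), h.Monic → Polynomial.aeval α h = 0 →
      f.natDegree ≤ h.natDegree)
    (hg_min : ∀ h : Polynomial (ZMod (p ^ 2)), h.Monic → Polynomial.aeval α h = 0 →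
      g.natDegree ≤ h.natDegree) :
    ∀ i : ℕ, (p : ZMod (p ^ 2)) ∣ (f - g).coeff i := by
  haveI : NeZero p := ⟨hp.ne_zero⟩
  haveI : NeZero (p^2) := ⟨pow_ne_zero 2 hp.ne_zero⟩
  haveI : Fact p.Prime := ⟨hp⟩
  haveI : Nontrivial (ZMod (p^2)) := by
    haveI : Fact (1 < p ^ 2) := ⟨Nat.one_lt_pow two_ne_zero hp.one_lt⟩
    infer_instance
  set φ : ZMod (p^2) →+* ZMod p := ZMod.castHom (dvd_pow_self p two_ne_zero) (ZMod p) with hφ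
  set d : Polynomial (ZMod (p^2)) := f - g with hd_def
  suffices h : d.map φ = 0 by
    intro i
    apply aux_dvd_of_map_eq_zero hp
    have := congrArg (fun q => Polynomial.coeff q i) h
    simp only [Polynomial.coeff_map, Polynomial.coeff_zero] at this
    exact this
  by_contra hdm
  have hdne : d ≠ 0 := fun h0 => hdm (by rw [h0, Polynomial.map_zero])
  -- degrees of f and g agree
  have hfg : f.natDegree = g.natDegree :=
    le_antisymm (hf_min g hg_monic hg_root) (hg_min f hf_monic hf_root)
  have hdeg : d.degree < f.degree := by
    apply Polynomial.degree_sub_lt _ hf_monic.ne_zero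
      (by rw [hf_monic.leadingCoeff, hg_monic.leadingCoeff])
    rw [Polynomial.degree_eq_natDegree hf_monic.ne_zero,
      Polynomial.degree_eq_natDegree hg_monic.ne_zero, hfg]
  set n := f.natDegree with hn
  set j := (d.map φ).natDegree with hj
  have hjd : j ≤ d.natDegree := Polynomial.natDegree_map_le
  have hdn : d.natDegree < n := Polynomial.natDegree_lt_natDegree hdne hdeg
  have hjn : j < n := lt_of_le_of_lt hjd hdn
  have hjn1 : j ≤ n - 1 := Nat.le_sub_one_of_lt hjn
  have hd_root : Polynomial.aeval α d = 0 := by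
    rw [hd_def, map_sub, hf_root, hg_root, sub_zero]
  set d' : Polynomial (ZMod (p^2)) := Polynomial.X ^ (n - 1 - j) * d with hd'
  set r : Polynomial (ZMod (p^2)) := d' %ₘ f with hr
  have hr_root : Polynomial.aeval α r = 0 := by
    rw [hr, Polynomial.modByMonic_eq_sub_mul_div d' f]
    simp [hd', hd_root, hf_root]
  -- map of r
  have hmap_d' : (d'.map φ) = Polynomial.X ^ (n - 1 - j) * d.map φ := by
    rw [hd', Polynomial.map_mul, Polynomial.map_pow, Polynomial.map_X]
  have hdeg_d' : (d'.map φ).degree < (f.map φ).degree := by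
    have hne : (Polynomial.X ^ (n-1-j) * d.map φ) ≠ 0 :=
      mul_ne_zero (pow_ne_zero _ Polynomial.X_ne_zero) hdm
    have hnat : (Polynomial.X ^ (n-1-j) * d.map φ).natDegree = (n-1-j) + j := by
      rw [Polynomial.natDegree_mul (pow_ne_zero _ Polynomial.X_ne_zero) hdm,
        Polynomial.natDegree_X_pow]
    rw [hmap_d', hf_monic.degree_map φ, Polynomial.degree_eq_natDegree hne, hnat,
      Polynomial.degree_eq_natDegree hf_monic.ne_zero]
    exact_mod_cast lt_of_le_of_lt (show n-1-j+j ≤ n-1 by omega) (by omega)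
  have hmap_r : r.map φ = d'.map φ := by
    rw [hr, Polynomial.map_modByMonic _ hf_monic,
      (Polynomial.modByMonic_eq_self_iff (hf_monic.map φ)).2 hdeg_d']
  -- coefficient n-1 of r is a unit
  have hcoeff : φ (r.coeff (n - 1)) ≠ 0 := by
    have h1 : (r.map φ).coeff (n - 1) = (d.map φ).coeff j := by
      rw [hmap_r, hmap_d']
      have h2 := Polynomial.coeff_X_pow_mul (d.map φ) (n-1-j) j
      rwa [show j + (n-1-j) = n - 1 from by omega] at h2
    rw [← Polynomial.coeff_map, h1]
    exact Polynomial.leadingCoeff_ne_zero.2 hdm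
  have hcoeff' : r.coeff (n - 1) ≠ 0 := fun h0 => hcoeff (by rw [h0, map_zero])
  have hunit : IsUnit (r.coeff (n - 1)) := aux_isUnit_of_map_ne_zero hp _ hcoeff
  have hrne : r ≠ 0 := fun h0 => hcoeff' (by rw [h0]; simp)
  have hrdeg_lt : r.degree < f.degree := Polynomial.degree_modByMonic_lt d' hf_monic
  have hrnat : r.natDegree = n - 1 := by
    have h1 : n - 1 ≤ r.natDegree := Polynomial.le_natDegree_of_ne_zero hcoeff'
    have h2 : r.natDegree < n := Polynomial.natDegree_lt_natDegree hrne hrdeg_lt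
    omega
  have hulead : IsUnit r.leadingCoeff := by rwa [Polynomial.leadingCoeff, hrnat]
  -- build monic annihilator of degree n - 1
  set h : Polynomial (ZMod (p^2)) := hulead.unit⁻¹ • r with hh
  have hmonic : h.Monic := Polynomial.monic_of_isUnit_leadingCoeff_inv_smul hulead
  have hdegh : h.natDegree = n - 1 := by
    rw [hh, Polynomial.natDegree_smul_of_smul_regular r
      (isSMulRegular_of_group _), hrnat]
  have hrooth : Polynomial.aeval α h = 0 := by
    rw [hh, Units.smul_def, Polynomial.smul_eq_C_mul, map_mul, hr_root, mul_zero]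
  have := hf_min h hmonic hrooth
  omega
end

section
/- Let R be a Z-local ring containing a field F, α ∈ R integral over F, and let g ∈ F[x] be the minimal polynomial of the image ᾱ of α in K = R/J(R). If f ∈ F[x] is the minimal polynomial of α over F, then f = g^u for some u with 1 ≤ u ≤ 2. -/
theorem stmt_7 (R : Type*) [CommRing R] [IsLocalRing R] (h : IsZLocal R)
    (F : Type*) [Field F] [Algebra F R]
    (hinj : Function.Injective (algebraMap F R))
    (α : R) (hint : IsIntegral F α) :
    ∃ u : ℕ, 1 ≤ u ∧ u ≤ 2 ∧
      minpoly F α =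
        (minpoly F (Ideal.Quotient.mk (IsLocalRing.maximalIdeal R) α)) ^ u := by
  set m := IsLocalRing.maximalIdeal R with hm
  let φ : R →ₐ[F] R ⧸ m := Ideal.Quotient.mkₐ F m
  have hφ : ∀ x : R, φ x = Ideal.Quotient.mk m x := fun x => rfl
  have hαbar : IsIntegral F (φ α) := hint.map φ
  set g := minpoly F (φ α) with hg
  set f := minpoly F α with hf
  have hgm : g.Monic := minpoly.monic hαbar
  have hfm : f.Monic := minpoly.monic hint
  have h1 : (Polynomial.aeval α) g ∈ m := by
    have h2 : φ ((Polynomial.aeval α) g) = 0 := by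
      rw [← Polynomial.aeval_algHom_apply, minpoly.aeval]
    rw [hφ, Ideal.Quotient.eq_zero_iff_mem] at h2
    exact h2
  have h3 : (Polynomial.aeval α) (g ^ 2) = 0 := by
    rw [map_pow]
    have := Ideal.pow_mem_pow h1 2
    rw [h.2] at this
    simpa using this
  have hfdvd : f ∣ g ^ 2 := minpoly.dvd F α h3
  have hgdvd : g ∣ f := by
    apply minpoly.dvd F (φ α)
    rw [Polynomial.aeval_algHom_apply, minpoly.aeval, map_zero]
  have hgirr : Irreducible g := minpoly.irreducible hαbar
  obtain ⟨i, hi2, hassoc⟩ := (dvd_prime_pow hgirr.prime 2).mp hfdvd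
  have hfeq : f = g ^ i :=
    Polynomial.eq_of_monic_of_associated hfm (hgm.pow i) hassoc
  refine ⟨i, ?_, hi2, ?_⟩
  · rcases Nat.eq_zero_or_pos i with h0 | h0
    · exfalso
      rw [h0, pow_zero] at hfeq
      exact hgirr.not_isUnit (isUnit_of_dvd_one (hfeq ▸ hgdvd))
    · exact h0
  · exact hfeq
end

section
/- Let R be a Z-local ring containing a field F, α ∈ R with g(α) = 0 for g the minimal polynomial of ᾱ over F, and suppose R/J(R) = F[ᾱ]. Then F[α] is a subfield of R and R = F[α] ⊕ J(R) as F[α]-modules. -/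
theorem stmt_8 (R : Type*) [CommRing R] [IsLocalRing R] (h : IsZLocal R)
    (F : Type*) [Field F] [Algebra F R]
    (hinj : Function.Injective (algebraMap F R))
    (α : R)
    (hgen : Algebra.adjoin F
      {Ideal.Quotient.mk (IsLocalRing.maximalIdeal R) α} = ⊤)
    (hroot : Polynomial.aeval α
      (minpoly F (Ideal.Quotient.mk (IsLocalRing.maximalIdeal R) α)) = 0) :
    IsField (Algebra.adjoin F {α}) ∧
    (∀ r : R, ∃! sm : R × R,
      sm.1 ∈ Algebra.adjoin F {α} ∧ sm.2 ∈ IsLocalRing.maximalIdeal R ∧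
        r = sm.1 + sm.2) := by
  set m := IsLocalRing.maximalIdeal R with hm
  let π : R →ₐ[F] R ⧸ m := Ideal.Quotient.mkₐ F m
  have hπ : ∀ x : R, π x = Ideal.Quotient.mk m x := fun x => rfl
  set αb : R ⧸ m := Ideal.Quotient.mk m α with hαb
  -- kernel of π on the adjoin is trivial
  have hker : ∀ s ∈ Algebra.adjoin F {α}, Ideal.Quotient.mk m s = 0 → s = 0 := by
    intro s hs h0
    rw [Algebra.adjoin_singleton_eq_range_aeval] at hs
    obtain ⟨p, rfl⟩ := hs
    have h1 : Polynomial.aeval αb p = 0 := by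
      have := Polynomial.aeval_algHom_apply π α p
      rw [hπ, ← hαb] at this
      rw [this, hπ]; exact h0
    obtain ⟨q, hq⟩ := minpoly.dvd F αb h1
    show Polynomial.aeval α p = 0
    rw [hq, map_mul, hroot, zero_mul]
  -- surjectivity of π from the adjoin
  have hsurj : ∀ k : R ⧸ m, ∃ s ∈ Algebra.adjoin F {α}, Ideal.Quotient.mk m s = k := by
    intro k
    have hk : k ∈ Algebra.adjoin F {αb} := by rw [hgen]; trivial
    rw [Algebra.adjoin_singleton_eq_range_aeval] at hk
    obtain ⟨p, hp⟩ := hk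
    refine ⟨Polynomial.aeval α p, ?_, ?_⟩
    · rw [Algebra.adjoin_singleton_eq_range_aeval]; exact ⟨p, rfl⟩
    · have := Polynomial.aeval_algHom_apply π α p
      rw [hπ, ← hαb] at this
      rw [← hπ, ← this]; exact hp
  letI : Field (R ⧸ m) := Ideal.Quotient.field m
  constructor
  · refine ⟨⟨0, 1, ?_⟩, mul_comm, ?_⟩
    · intro hc
      exact zero_ne_one (congrArg Subtype.val hc)
    · rintro ⟨a, ha⟩ ha0
      have ha0' : a ≠ 0 := fun hc => ha0 (Subtype.ext hc)
      have hπa : Ideal.Quotient.mk m a ≠ 0 := fun hc => ha0' (hker a ha hc)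
      obtain ⟨t, ht, htk⟩ := hsurj (Ideal.Quotient.mk m a)⁻¹
      have hprod : a * t - 1 = 0 := by
        apply hker _ (sub_mem (mul_mem ha ht) (Subalgebra.one_mem _))
        rw [map_sub, map_mul, htk, map_one, mul_inv_cancel₀ hπa, sub_self]
      refine ⟨⟨t, ht⟩, Subtype.ext ?_⟩
      have : a * t = 1 := by linear_combination hprod
      exact this
  · intro r
    obtain ⟨s, hs, hsk⟩ := hsurj (Ideal.Quotient.mk m r)
    refine ⟨(s, r - s), ⟨hs, ?_, by ring⟩, ?_⟩
    · rw [← Ideal.Quotient.eq_zero_iff_mem, map_sub, hsk, sub_self]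
    · rintro ⟨s', m'⟩ ⟨hs', hm', hr'⟩
      have hdiff : s' - s ∈ m := by
        have : s' - s = (r - s) - m' := by rw [hr']; ring
        rw [this]
        exact Submodule.sub_mem _ (by
          rw [← Ideal.Quotient.eq_zero_iff_mem, map_sub, hsk, sub_self]) hm'
      have h0 : s' - s = 0 := by
        apply hker _ (sub_mem hs' hs)
        rwa [Ideal.Quotient.eq_zero_iff_mem]
      have hss : s' = s := by linear_combination h0
      have : m' = r - s := by rw [← hss]; linear_combination hr'.symm
      simp [Prod.ext_iff, hss, this]
end

section
/- Let K be a field and Y a set of indeterminates. Then the quotient ring R = K[Y]/⟨y_i y_j : i, j ∈ Y⟩ is a Z-local ring: it is local, J(R) = Z(R), and J(R)^2 = 0. -/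
set_option synthInstance.maxHeartbeats 1000000
set_option maxHeartbeats 1000000

theorem stmt_9 (K : Type*) [Field K] (Y : Type*) :
    let R := MvPolynomial Y K ⧸
      Ideal.span {q : MvPolynomial Y K |
        ∃ i j : Y, q = MvPolynomial.X i * MvPolynomial.X j}
    IsLocalRing R ∧
    (∀ z : R, z ∈ (⊥ : Ideal R).jacobson ↔ ∃ y : R, y ≠ 0 ∧ z * y = 0) ∧
    ((⊥ : Ideal R).jacobson) ^ 2 = ⊥ := by
  intro R
  set A := MvPolynomial Y K with hA
  set I : Ideal A := Ideal.span {q : A | ∃ i j : Y,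
      q = MvPolynomial.X i * MvPolynomial.X j} with hIdef
  set M : Ideal A := Ideal.span (Set.range MvPolynomial.X) with hMdef
  -- I = M * M
  have hI : I = M * M := by
    rw [hIdef, hMdef, Ideal.span_mul_span']
    congr 1
    ext q
    constructor
    · rintro ⟨i, j, rfl⟩
      exact Set.mul_mem_mul ⟨i, rfl⟩ ⟨j, rfl⟩
    · rintro ⟨a, ⟨i, rfl⟩, b, ⟨j, rfl⟩, rfl⟩
      exact ⟨i, j, rfl⟩
  -- M is the kernel of constantCoeff
  have hMker : M = RingHom.ker (MvPolynomial.constantCoeff : A →+* K) := by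
    ext p
    rw [hMdef, ← Set.image_univ, MvPolynomial.mem_ideal_span_X_image,
      RingHom.mem_ker, MvPolynomial.constantCoeff_eq, ← MvPolynomial.notMem_support_iff]
    constructor
    · intro h h0
      obtain ⟨i, -, hi⟩ := h 0 h0
      exact hi rfl
    · intro h m hm
      by_contra hc
      push_neg at hc
      refine h ?_
      have : m = 0 := by
        ext i
        simpa using hc i (Set.mem_univ i)
      rwa [this] at hm
  have hMmax : M.IsMaximal := by
    rw [hMker]
    exact RingHom.ker_isMaximal_of_surjective _ fun k => ⟨MvPolynomial.C k, MvPolynomial.constantCoeff_C Y k⟩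
  set π := Ideal.Quotient.mk I with hπ
  set m : Ideal R := M.map π with hmdef
  have hInetop : I ≠ ⊤ := by
    intro h
    refine hMmax.ne_top (top_le_iff.mp ?_)
    rw [← h, hI]
    exact Ideal.mul_le_left
  have hILE : I ≤ M := by rw [hI]; exact Ideal.mul_le_left
  -- m ^ 2 = ⊥
  have hm2 : m ^ 2 = ⊥ := by
    rw [hmdef, ← Ideal.map_pow, sq, ← hI, hπ, Ideal.map_quotient_self]
  -- m is maximal
  have hmmax : m.IsMaximal := by
    have hgen : ∀ p ∈ I, MvPolynomial.constantCoeff p = 0 := fun p hp => by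
      have := hILE hp
      rwa [hMker, RingHom.mem_ker] at this
    have := Ideal.ker_quotient_lift (I := I)
      (MvPolynomial.constantCoeff : A →+* K) hgen
    rw [← hMker] at this
    rw [hmdef, hπ, ← this]
    refine RingHom.ker_isMaximal_of_surjective _ ?_
    intro k
    exact ⟨π (MvPolynomial.C k), by rw [hπ, Ideal.Quotient.lift_mk]; exact MvPolynomial.constantCoeff_C Y k⟩
  -- jacobson ⊥ = m
  have hjac : (⊥ : Ideal R).jacobson = m := by
    apply le_antisymm
    · exact sInf_le ⟨bot_le, hmmax⟩
    · intro x hx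
      rw [Ideal.jacobson, Ideal.mem_sInf]
      rintro J ⟨-, hJ⟩
      have hx2 : x ^ 2 = 0 := by
        have := Ideal.pow_mem_pow hx 2
        rwa [hm2, Ideal.mem_bot] at this
      exact hJ.isPrime.mem_of_pow_mem 2 (by rw [hx2]; exact J.zero_mem)
  haveI : Nontrivial R := Ideal.Quotient.nontrivial_iff.mpr hInetop
  haveI : IsLocalRing R := by
    refine IsLocalRing.of_unique_max_ideal ⟨m, hmmax, fun J hJ => ?_⟩
    have h1 : (⊥ : Ideal R).jacobson ≤ J := sInf_le ⟨bot_le, hJ⟩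
    rw [hjac] at h1
    exact (hmmax.eq_of_le hJ.ne_top h1).symm
  refine ⟨inferInstance, fun z => ?_, by rw [hjac]; exact hm2⟩
  constructor
  · intro hz
    rw [hjac] at hz
    by_cases h0 : z = 0
    · exact ⟨1, one_ne_zero, by rw [h0, zero_mul]⟩
    · refine ⟨z, h0, ?_⟩
      have := Ideal.pow_mem_pow hz 2
      rw [hm2, Ideal.mem_bot] at this
      rw [← sq]; exact this
  · rintro ⟨y, hy, hzy⟩
    rw [hjac]
    by_contra hzm
    have hu : IsUnit z := by
      have : m = IsLocalRing.maximalIdeal R := IsLocalRing.eq_maximalIdeal hmmax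
      rw [this] at hzm
      exact not_not.mp fun h => hzm ((IsLocalRing.mem_maximalIdeal z).mpr h)
    exact hy ((hu.mul_right_eq_zero).mp hzy)
end

section
/- Let n ≥ 2 and S = ℤ/2ℤ[x_1, …, x_n]/⟨x_1², …, x_n²⟩. Then S is a finite local ring with J(S) = Z(S) and z² = 0 for every zero-divisor z of S, but J(S)² ≠ 0, so S is not a Z-local ring. -/
open MvPolynomial

private abbrev RR (n : ℕ) := MvPolynomial (Fin n) (ZMod 2)

private noncomputable abbrev II (n : ℕ) : Ideal (RR n) :=
  Ideal.span {q : MvPolynomial (Fin n) (ZMod 2) | ∃ i : Fin n, q = MvPolynomial.X i ^ 2}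

private lemma sq_mem (n : ℕ) (p : RR n) (hp : constantCoeff p = 0) : p ^ 2 ∈ II n := by
  have hsum : p ^ 2 = ∑ d ∈ p.support, (monomial d (coeff d p)) ^ 2 := by
    conv_lhs => rw [as_sum p]
    exact CharTwo.sum_sq _ _
  rw [hsum]
  apply Ideal.sum_mem
  intro d hd
  rw [monomial_pow]
  have hd0 : d ≠ 0 := by
    intro h
    apply MvPolynomial.mem_support_iff.1 hd
    rw [h]
    rw [constantCoeff_eq] at hp
    exact hp
  obtain ⟨i, hi⟩ := Finsupp.ne_iff.1 hd0
  simp only [Finsupp.coe_zero, Pi.zero_apply] at hi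
  have hle : Finsupp.single i 2 ≤ 2 • d := by
    rw [Finsupp.single_le_iff]
    have : 1 ≤ d i := Nat.one_le_iff_ne_zero.2 hi
    calc (2:ℕ) = 2 * 1 := by norm_num
    _ ≤ 2 * d i := by omega
    _ = (2 • d) i := by simp
  have heq : monomial (2 • d) (coeff d p ^ 2) =
      X i ^ 2 * monomial (2 • d - Finsupp.single i 2) (coeff d p ^ 2) := by
    rw [X_pow_eq_monomial, monomial_mul, one_mul, add_tsub_cancel_of_le hle]
  rw [heq]
  exact Ideal.mul_mem_right _ _ (Ideal.subset_span ⟨i, rfl⟩)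

private lemma xx_not_mem (n : ℕ) (i0 i1 : Fin n) (hne : i0 ≠ i1) :
    (X i0 * X i1 : RR n) ∉ II n := by
  intro h
  set e : Fin n →₀ ℕ := Finsupp.single i0 1 + Finsupp.single i1 1 with he
  obtain ⟨k, f, g, hsum⟩ := Submodule.mem_span_set'.1 h
  have hc := congrArg (coeff e) hsum
  rw [coeff_sum] at hc
  have hzero : ∀ j : Fin k, coeff e (f j • (g j : RR n)) = 0 := by
    intro j
    obtain ⟨q, hq⟩ := g j
    obtain ⟨i, rfl⟩ := hq
    have : f j • (X i ^ 2 : RR n) = f j * monomial (Finsupp.single i 2) 1 := by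
      rw [smul_eq_mul, X_pow_eq_monomial]
    rw [this, coeff_mul_monomial']
    have : ¬ Finsupp.single i 2 ≤ e := by
      rw [Finsupp.single_le_iff]
      have : e i ≤ 1 := by
        rw [he]
        simp only [Finsupp.add_apply, Finsupp.single_apply]
        rcases eq_or_ne i0 i with h0 | h0 <;> rcases eq_or_ne i1 i with h1 | h1 <;>
          simp [h0, h1] <;> omega
      omega
    simp [this]
  rw [Finset.sum_congr rfl (fun j _ => hzero j), Finset.sum_const, smul_zero] at hc
  have hxy : (X i0 * X i1 : RR n) = monomial e 1 := by
    rw [X, X, monomial_mul, one_mul]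
  rw [hxy, coeff_monomial, if_pos rfl] at hc
  exact absurd hc (by decide)

private abbrev SS (n : ℕ) := RR n ⧸ II n

private lemma span_top (n : ℕ) :
    Submodule.span (ZMod 2) (Set.range (fun s : Finset (Fin n) =>
      (Ideal.Quotient.mkₐ (ZMod 2) (II n) (∏ i ∈ s, X i) : SS n))) = ⊤ := by
  rw [eq_top_iff]
  rintro z -
  obtain ⟨p, rfl⟩ := Ideal.Quotient.mkₐ_surjective (ZMod 2) (II n) z
  rw [as_sum p, map_sum]
  apply Submodule.sum_mem
  intro d _
  have hmo : (monomial d (coeff d p) : RR n) = (coeff d p) • monomial d 1 := by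
    rw [smul_monomial, smul_eq_mul, mul_one]
  rw [hmo, map_smul]
  apply Submodule.smul_mem
  by_cases hsq : ∀ i, d i ≤ 1
  · have hprod : (monomial d 1 : RR n) = ∏ i ∈ d.support, X i := by
      rw [monomial_eq, C_1, one_mul, Finsupp.prod]
      apply Finset.prod_congr rfl
      intro i hi
      have h1 : d i = 1 :=
        le_antisymm (hsq i) (Nat.one_le_iff_ne_zero.2 (Finsupp.mem_support_iff.1 hi))
      rw [h1, pow_one]
    rw [hprod]
    exact Submodule.subset_span ⟨d.support, rfl⟩
  · push_neg at hsq
    obtain ⟨i, hi⟩ := hsq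
    have hle : Finsupp.single i 2 ≤ d := Finsupp.single_le_iff.2 hi
    have hmem : (monomial d 1 : RR n) ∈ II n := by
      have hzz : (monomial d 1 : RR n) = X i ^ 2 * monomial (d - Finsupp.single i 2) 1 := by
        rw [X_pow_eq_monomial, monomial_mul, one_mul, add_tsub_cancel_of_le hle]
      rw [hzz]
      exact Ideal.mul_mem_right _ _ (Ideal.subset_span ⟨i, rfl⟩)
    have h0 : (Ideal.Quotient.mkₐ (ZMod 2) (II n) (monomial d 1) : SS n) = 0 := by
      rw [Ideal.Quotient.mkₐ_eq_mk, Ideal.Quotient.eq_zero_iff_mem]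
      exact hmem
    rw [h0]
    exact Submodule.zero_mem _

private lemma unit_of (n : ℕ) (p : RR n) (hp : constantCoeff p = 1) :
    IsUnit (Ideal.Quotient.mk (II n) p) := by
  have h1 : constantCoeff (p + 1) = 0 := by
    rw [map_add, map_one, hp, CharTwo.add_self_eq_zero]
  have h2 := sq_mem n (p + 1) h1
  have h3 : (p : RR n) ^ 2 = (p + 1) ^ 2 + 1 := by
    rw [CharTwo.add_sq, one_pow, add_assoc, CharTwo.add_self_eq_zero, add_zero]
  refine IsUnit.of_mul_eq_one (Ideal.Quotient.mk (II n) p) ?_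
  rw [← map_mul, ← pow_two, h3, map_add, map_one, Ideal.Quotient.eq_zero_iff_mem.2 h2, zero_add]

private lemma main (n : ℕ) (hn : 2 ≤ n) :
    Finite (SS n) ∧
    IsLocalRing (SS n) ∧
    (∀ z : SS n, z ∈ (⊥ : Ideal (SS n)).jacobson ↔ ∃ y : SS n, y ≠ 0 ∧ z * y = 0) ∧
    (∀ z : SS n, (∃ y : SS n, y ≠ 0 ∧ z * y = 0) → z ^ 2 = 0) ∧
    ((⊥ : Ideal (SS n)).jacobson) ^ 2 ≠ ⊥ := by
  have hvan : II n ≤ RingHom.ker (constantCoeff (σ := Fin n) (R := ZMod 2)) := by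
    rw [Ideal.span_le]
    rintro q ⟨i, rfl⟩
    simp [SetLike.mem_coe, RingHom.mem_ker]
  set φ : SS n →+* ZMod 2 :=
    Ideal.Quotient.lift (II n) constantCoeff (fun a ha => hvan ha) with hφdef
  have hφmk : ∀ p : RR n, φ (Ideal.Quotient.mk (II n) p) = constantCoeff p :=
    fun p => Ideal.Quotient.lift_mk _ _ _
  have hnt : Nontrivial (SS n) := by
    refine ⟨1, 0, fun h => ?_⟩
    have hc := congrArg φ h
    rw [map_one, map_zero] at hc
    exact absurd hc (by decide)
  have hsurj : Function.Surjective φ := fun c =>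
    ⟨Ideal.Quotient.mk _ (C c), by rw [hφmk, constantCoeff_C]⟩
  set M := RingHom.ker φ with hMdef
  have hMmax : M.IsMaximal := RingHom.ker_isMaximal_of_surjective φ hsurj
  have hMsq : ∀ z ∈ M, z ^ 2 = 0 := by
    intro z hz
    obtain ⟨p, rfl⟩ := Ideal.Quotient.mk_surjective z
    rw [hMdef, RingHom.mem_ker, hφmk] at hz
    rw [← map_pow, Ideal.Quotient.eq_zero_iff_mem]
    exact sq_mem n p hz
  have hMunit : ∀ z : SS n, z ∉ M → IsUnit z := by
    intro z hz
    obtain ⟨p, rfl⟩ := Ideal.Quotient.mk_surjective z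
    rw [hMdef, RingHom.mem_ker, hφmk] at hz
    have hone : ∀ c : ZMod 2, c ≠ 0 → c = 1 := by decide
    exact unit_of n p (hone _ hz)
  have hjac : (⊥ : Ideal (SS n)).jacobson = M := by
    apply le_antisymm
    · exact sInf_le ⟨bot_le, hMmax⟩
    · intro z hz
      rw [Ideal.mem_jacobson_bot]
      intro y
      have hzy : (z * y) ^ 2 = 0 := by rw [mul_pow, hMsq z hz, zero_mul]
      refine IsUnit.of_mul_eq_one (1 - z * y) ?_
      have hr : (z * y + 1) * (1 - z * y) = 1 - (z * y) ^ 2 := by ring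
      rw [hr, hzy, sub_zero]
  have hzd : ∀ z : SS n, (∃ y : SS n, y ≠ 0 ∧ z * y = 0) → z ∈ M := by
    rintro z ⟨y, hy0, hzy⟩
    by_contra hz
    exact hy0 ((IsUnit.mul_right_eq_zero (hMunit z hz)).1 hzy)
  refine ⟨?_, ?_, ?_, ?_, ?_⟩
  · have hfin : Module.Finite (ZMod 2) (SS n) := by
      rw [Module.finite_def, Submodule.fg_def]
      exact ⟨_, Set.finite_range _, span_top n⟩
    exact Module.finite_of_finite (ZMod 2)
  · apply IsLocalRing.of_isUnit_or_isUnit_one_sub_self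
    intro a
    by_cases ha : a ∈ M
    · right
      apply hMunit
      intro h
      have h1 : (1 : SS n) ∈ M := by
        have := M.add_mem h ha
        simpa using this
      exact (Ideal.ne_top_iff_one M).1 hMmax.ne_top h1
    · exact Or.inl (hMunit a ha)
  · intro z
    rw [hjac]
    constructor
    · intro hz
      have h10 : (1 : SS n) ≠ 0 := by
        intro h
        have hc := congrArg φ h
        rw [map_one, map_zero] at hc
        exact absurd hc (by decide)
      by_cases h0 : z = 0
      · exact ⟨1, h10, by rw [h0, zero_mul]⟩
      · exact ⟨z, h0, by rw [← pow_two]; exact hMsq z hz⟩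
    · exact hzd z
  · intro z hz
    exact hMsq z (hzd z hz)
  · intro hbot
    have h0 : Ideal.Quotient.mk (II n) (X ⟨0, by omega⟩) ∈ M := by
      rw [hMdef, RingHom.mem_ker, hφmk, constantCoeff_X]
    have h1 : Ideal.Quotient.mk (II n) (X ⟨1, by omega⟩) ∈ M := by
      rw [hMdef, RingHom.mem_ker, hφmk, constantCoeff_X]
    have hmem : Ideal.Quotient.mk (II n) (X ⟨0, by omega⟩) *
        Ideal.Quotient.mk (II n) (X ⟨1, by omega⟩) ∈ ((⊥ : Ideal (SS n)).jacobson) ^ 2 := by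
      rw [hjac, pow_two]
      exact Ideal.mul_mem_mul h0 h1
    rw [hbot, Ideal.mem_bot, ← map_mul, Ideal.Quotient.eq_zero_iff_mem] at hmem
    exact xx_not_mem n ⟨0, by omega⟩ ⟨1, by omega⟩ (Fin.ne_of_val_ne (by norm_num)) hmem

theorem stmt_12 (n : ℕ) (hn : 2 ≤ n) :
    let S := MvPolynomial (Fin n) (ZMod 2) ⧸
      Ideal.span {q : MvPolynomial (Fin n) (ZMod 2) |
        ∃ i : Fin n, q = MvPolynomial.X i ^ 2}
    Finite S ∧
    IsLocalRing S ∧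
    (∀ z : S, z ∈ (⊥ : Ideal S).jacobson ↔ ∃ y : S, y ≠ 0 ∧ z * y = 0) ∧
    (∀ z : S, (∃ y : S, y ≠ 0 ∧ z * y = 0) → z ^ 2 = 0) ∧
    ((⊥ : Ideal S).jacobson) ^ 2 ≠ ⊥ := by
  intro S
  exact main n hn
end
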